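/- arXiv:math/0504339 — 2 statements merged into one kernel-verified Lean document; each statement's English description precedes it below -/
import Mathlib

section
/- Lemma 5.1, pointwise part (inequality (5.1)). For every n ≥ 2 there is a constant C depending only on n with the following property: for every n×n real matrix M = (M_{ik}) (to be thought of as the derivative M_{ik} = ∂_kβ_i of a one-form β) and every vector Ñ ∈ ℝⁿ with |Ñ| ≤ 1, setting q^{kl} = δ^{kl} − Ñ^kÑ^l, one has Σ_{i,k} M_{ik}² ≤ C ( Σ_{i,k,l} q^{kl} M_{ik} M_{il} + Σ_{i,j} (M_{ij} − M_{ji})² + (Σ_i M_{ii})² ). In the paper's notation this reads |∂β|² ≤ C ( q^{kl}δ^{ij} ∂_kβ_i ∂_lβ_j + |curl β|² + |div β|² ), where curl β_{ij} = ∂_iβ_j − ∂_jβ_i and div β = ∂_iβ^i. -/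
/-!
Let `q` be the form of `δ - N Nᵀ`, positive semidefinite because `|N| ≤ 1`. For `v = M N` one has
`|M|² = ∑ᵢ q(Mᵢ, Mᵢ) + q(v, v) + (v ⬝ N)²`. Splitting `v = Mᵀ N + (M - Mᵀ) N`, the first part is
controlled by the tangential energy `∑ᵢ q(Mᵢ, Mᵢ)` through Cauchy–Schwarz for `q`, the second by
the curl. Finally `v ⬝ N = tr M - ∑ₖ q(Mₖ, eₖ)`, and Cauchy–Schwarz for `q` bounds this sum by
the tangential energy once more, so the divergence controls `v ⬝ N`.
-/

open Matrix

namespace LinearMap.BilinForm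

variable {R M : Type*} [CommRing R] [LinearOrder R] [IsStrictOrderedRing R]
  [AddCommGroup M] [Module R M] {B : LinearMap.BilinForm R M}

lemma apply_add_self_le (hs : ∀ x, 0 ≤ B x x) (hB : B.IsSymm) (x y : M) :
    B (x + y) (x + y) ≤ 2 * B x x + 2 * B y y := by
  have h := hs (x - y)
  have hyx : B y x = B x y := hB.eq y x
  simp only [map_add, map_sub, LinearMap.add_apply, LinearMap.sub_apply] at h ⊢
  linarith

variable {κ : Type*} [Fintype κ]

lemma sum_apply_sq_le (hs : ∀ x, 0 ≤ B x x) (hB : B.IsSymm) (x y : κ → M) :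
    (∑ k, B (x k) (y k)) ^ 2 ≤ (∑ k, B (x k) (x k)) * ∑ k, B (y k) (y k) := by
  let B' : LinearMap.BilinForm R (κ → M) := ∑ k, B.compl₁₂ (proj k) (proj k)
  have hB' : ∀ X Y, B' X Y = ∑ k, B (X k) (Y k) := fun X Y => by simp [B']
  simp only [← hB']
  refine apply_sq_le_of_symm B' (fun X => ?_) ⟨fun X Y => ?_⟩ x y
  · rw [hB']; exact Finset.sum_nonneg fun k _ => hs (X k)
  · simp only [hB', RingHom.id_apply]; exact Finset.sum_congr rfl fun k _ => hB.eq _ _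

lemma apply_sum_smul_self_le (hs : ∀ x, 0 ≤ B x x) (hB : B.IsSymm) (c : κ → R) (x : κ → M) :
    B (∑ k, c k • x k) (∑ k, c k • x k) ≤ (∑ k, c k ^ 2) * ∑ k, B (x k) (x k) := by
  have hlin : ∀ y, B (∑ k, c k • x k) y = ∑ k, B (x k) (c k • y) := fun y => by
    simp [map_sum, map_smul]
  set s := ∑ k, c k • x k
  have h := sum_apply_sq_le hs hB x (fun k => c k • s)
  rw [← hlin] at h
  simp only [map_smul, LinearMap.smul_apply, smul_eq_mul] at h
  have hc : ∑ k, c k * (c k * B s s) = (∑ k, c k ^ 2) * B s s := by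
    rw [Finset.sum_mul]; exact Finset.sum_congr rfl fun k _ => by ring
  rw [hc] at h
  have hK : 0 ≤ (∑ k, c k ^ 2) * ∑ k, B (x k) (x k) :=
    mul_nonneg (Finset.sum_nonneg fun k _ => sq_nonneg _) (Finset.sum_nonneg fun k _ => hs _)
  nlinarith [hs s]

end LinearMap.BilinForm

namespace Matrix

variable {ι : Type*} [Fintype ι]

lemma mulVec_dotProduct_self_le (K : Matrix ι ι ℝ) (v : ι → ℝ) :
    K *ᵥ v ⬝ᵥ K *ᵥ v ≤ (∑ i, ∑ j, K i j ^ 2) * (v ⬝ᵥ v) := by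
  rw [Finset.sum_mul]
  refine Finset.sum_le_sum fun i _ => ?_
  simpa only [mulVec, dotProduct, sq] using Finset.sum_mul_sq_le_sq_mul_sq Finset.univ (K i) v

variable [DecidableEq ι]

def tangentialForm (N : ι → ℝ) : LinearMap.BilinForm ℝ (ι → ℝ) :=
  toBilin' (1 - vecMulVec N N)

variable {N : ι → ℝ}

lemma tangentialForm_apply (N x y : ι → ℝ) :
    tangentialForm N x y = x ⬝ᵥ y - (x ⬝ᵥ N) * (y ⬝ᵥ N) := by
  simp only [tangentialForm, map_sub, LinearMap.sub_apply, toBilin'_apply', one_mulVec,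
    vecMulVec_mulVec, op_smul_eq_smul, dotProduct_smul, smul_eq_mul, sub_right_inj]
  rw [dotProduct_comm N y, mul_comm]

lemma tangentialForm_isSymm : (tangentialForm N).IsSymm :=
  ⟨fun x y => by simp only [tangentialForm_apply, dotProduct_comm]; ring⟩

lemma tangentialForm_self_nonneg (hN : N ⬝ᵥ N ≤ 1) (x : ι → ℝ) : 0 ≤ tangentialForm N x x := by
  have cs : (x ⬝ᵥ N) ^ 2 ≤ (x ⬝ᵥ x) * (N ⬝ᵥ N) := by
    simpa only [dotProduct, sq] using Finset.sum_mul_sq_le_sq_mul_sq Finset.univ x N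
  have hx : 0 ≤ x ⬝ᵥ x := Finset.sum_nonneg fun i _ => mul_self_nonneg (x i)
  rw [tangentialForm_apply]
  nlinarith [mul_le_mul_of_nonneg_left hN hx]

lemma tangentialForm_self_le (x : ι → ℝ) : tangentialForm N x x ≤ x ⬝ᵥ x := by
  rw [tangentialForm_apply]
  nlinarith [sq_nonneg (x ⬝ᵥ N)]

lemma tangentialForm_single_self_le (k : ι) :
    tangentialForm N (Pi.single k 1) (Pi.single k 1) ≤ 1 := by
  simpa [tangentialForm_apply] using mul_self_nonneg (N k)

lemma sum_tangentialForm_self_rows (M : Matrix ι ι ℝ) (N : ι → ℝ) :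
    ∑ i, tangentialForm N (M i) (M i) =
      ∑ k, ∑ l, (1 - vecMulVec N N) k l * ∑ i, M i k * M i l := by
  simp only [tangentialForm, toBilin'_apply, Finset.mul_sum]
  rw [Finset.sum_comm]
  refine Finset.sum_congr rfl fun k _ => ?_
  rw [Finset.sum_comm]
  exact Finset.sum_congr rfl fun l _ => Finset.sum_congr rfl fun i _ => by ring

lemma dotProduct_self_eq_tangentialForm_add (N x : ι → ℝ) :
    x ⬝ᵥ x = tangentialForm N x x + (x ⬝ᵥ N) ^ 2 := by
  rw [tangentialForm_apply]; ring

lemma sum_sq_eq_tangentialForm_add (M : Matrix ι ι ℝ) (N : ι → ℝ) :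
    ∑ i, ∑ k, M i k ^ 2 = ∑ i, tangentialForm N (M i) (M i) +
      tangentialForm N (M *ᵥ N) (M *ᵥ N) + (M *ᵥ N ⬝ᵥ N) ^ 2 :=
  calc ∑ i, ∑ k, M i k ^ 2 = ∑ i, M i ⬝ᵥ M i := by simp only [dotProduct, sq]
    _ = ∑ i, tangentialForm N (M i) (M i) + M *ᵥ N ⬝ᵥ M *ᵥ N := by
      simp only [dotProduct_self_eq_tangentialForm_add N (M _), Finset.sum_add_distrib, sq]
      rfl
    _ = _ := by rw [dotProduct_self_eq_tangentialForm_add N (M *ᵥ N), add_assoc]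

lemma mulVec_dotProduct_eq_trace_sub (M : Matrix ι ι ℝ) (N : ι → ℝ) :
    M *ᵥ N ⬝ᵥ N = M.trace - ∑ k, tangentialForm N (M k) (Pi.single k 1) := by
  simp only [trace, diag_apply, tangentialForm_apply, dotProduct_single, mul_one,
    single_dotProduct, one_mul, Finset.sum_sub_distrib, sub_sub_cancel]
  rfl

theorem sum_sq_le_tangentialForm_add_antisymm_add_trace (M : Matrix ι ι ℝ) (hN : N ⬝ᵥ N ≤ 1) :
    ∑ i, ∑ k, M i k ^ 2 ≤ (2 * Fintype.card ι + 3) *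
      (∑ i, tangentialForm N (M i) (M i) + ∑ i, ∑ j, (M i j - M j i) ^ 2 + M.trace ^ 2) := by
  set q := tangentialForm N
  have hs := tangentialForm_self_nonneg hN
  have hq : q.IsSymm := tangentialForm_isSymm
  set A := ∑ i, q (M i) (M i)
  set v := M *ᵥ N
  set w := Mᵀ *ᵥ N
  set u := (M - Mᵀ) *ᵥ N
  set t := ∑ k, q (M k) (Pi.single k 1)
  have hA : 0 ≤ A := Finset.sum_nonneg fun i _ => hs (M i)
  have hK : 0 ≤ ∑ i, ∑ j, (M i j - M j i) ^ 2 :=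
    Finset.sum_nonneg fun i _ => Finset.sum_nonneg fun j _ => sq_nonneg _
  have hvv : q v v ≤ 2 * q w w + 2 * q u u := by
    have hv : v = w + u := by simp [v, w, u, sub_mulVec]
    rw [hv]; exact LinearMap.BilinForm.apply_add_self_le hs hq w u
  have hww : q w w ≤ A := by
    have h := LinearMap.BilinForm.apply_sum_smul_self_le hs hq N M
    rw [← vecMul_eq_sum, ← mulVec_transpose] at h
    have hN' : ∑ k, N k ^ 2 ≤ 1 := by simpa only [dotProduct, sq] using hN
    nlinarith
  have huu : q u u ≤ ∑ i, ∑ j, (M i j - M j i) ^ 2 := by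
    have h := mulVec_dotProduct_self_le (M - Mᵀ) N
    simp only [sub_apply, transpose_apply] at h
    nlinarith [tangentialForm_self_le (N := N) u, mul_le_mul_of_nonneg_left hN hK]
  have ht : t ^ 2 ≤ Fintype.card ι * A := by
    have h := LinearMap.BilinForm.sum_apply_sq_le hs hq M (fun k => Pi.single k 1)
    have he : ∑ k, q (Pi.single k 1) (Pi.single k 1) ≤ Fintype.card ι := by
      simpa using Finset.sum_le_sum fun k (_ : k ∈ Finset.univ) =>
        tangentialForm_single_self_le (N := N) k
    nlinarith
  rw [sum_sq_eq_tangentialForm_add M N, mulVec_dotProduct_eq_trace_sub M N]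
  nlinarith [sq_nonneg (M.trace + t), sq_nonneg M.trace]

end Matrix

theorem lemma5_1_pointwise_general (n : ℕ) :
    ∃ C : ℝ, 0 < C ∧
      ∀ (M : Matrix (Fin n) (Fin n) ℝ) (N : EuclideanSpace ℝ (Fin n)), ‖N‖ ≤ 1 →
        (∑ i, ∑ k, M i k ^ 2) ≤
          C * ((∑ k, ∑ l, ((if k = l then (1 : ℝ) else 0) - N k * N l) *
                  (∑ i, M i k * M i l))
              + (∑ i, ∑ j, (M i j - M j i) ^ 2)
              + (∑ i, M i i) ^ 2) := by
  refine ⟨2 * n + 3, by positivity, fun M N hN => ?_⟩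
  have hN' : N.ofLp ⬝ᵥ N.ofLp ≤ 1 := by
    have h := real_inner_self_eq_norm_sq N
    rw [EuclideanSpace.inner_eq_star_dotProduct, star_trivial] at h
    rw [h]; exact pow_le_one₀ (norm_nonneg N) hN
  have h := sum_sq_le_tangentialForm_add_antisymm_add_trace M hN'
  rw [sum_tangentialForm_self_rows] at h
  simpa [one_apply, vecMulVec_apply, Matrix.trace] using h

theorem lemma5_1_pointwise (n : ℕ) (hn : 2 ≤ n) :
    ∃ C : ℝ, 0 < C ∧
      ∀ (M : Matrix (Fin n) (Fin n) ℝ) (N : EuclideanSpace ℝ (Fin n)), ‖N‖ ≤ 1 →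
        (∑ i, ∑ k, M i k ^ 2) ≤
          C * ((∑ k, ∑ l, ((if k = l then (1 : ℝ) else 0) - N k * N l) *
                  (∑ i, M i k * M i l))
              + (∑ i, ∑ j, (M i j - M j i) ^ 2)
              + (∑ i, M i i) ^ 2) :=
  lemma5_1_pointwise_general n
end

section
/- Lemma 11.1 (persistence of the coordinate and physical conditions). Let x : [0,T]×Ω → ℝⁿ be smooth with everywhere invertible Jacobian, and set M(t) = sup_{y∈Ω} ( |∂x/∂y(t,y)|² + |(∂x/∂y)(t,y)⁻¹|² )^{1/2}, using the Euclidean (Frobenius) matrix norm. (a) If T · |||x|||_{2,∞} · M(0) ≤ 1/8, then M(t) ≤ 2 M(0) for all 0 ≤ t ≤ T. (b) Suppose in addition that h is smooth on [0,T]×Ω with h(t,·) = 0 on ∂Ω for every t and that ∇_N h never vanishes on [0,T]×∂Ω, and set N(t) = sup_{y∈∂Ω} |∇_N h(t,y)|⁻¹. If, besides the hypothesis of (a), also T · |||h|||_{2,∞} · M(0) · N(0) ≤ 1/8, then N(t) ≤ 2 N(0) for all 0 ≤ t ≤ T. -/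
noncomputable section
open scoped BigOperators ENNReal Matrix
open Metric Set

namespace FB

/-- Euclidean space ℝⁿ. -/
abbrev Esp (n : ℕ) := EuclideanSpace ℝ (Fin n)

/-- The closed unit ball Ω. -/
def Omega (n : ℕ) : Set (Esp n) := Metric.closedBall 0 1

/-- The boundary ∂Ω, the unit sphere. -/
def Bdry (n : ℕ) : Set (Esp n) := Metric.sphere 0 1

/-- The space-time cylinder [0,T] × Ω. -/
def STc (n : ℕ) (T : ℝ) : Set (ℝ × Esp n) := Set.Icc 0 T ×ˢ Omega n

/-- Iterated directional derivatives along a list of directions. -/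
def DGen {E : Type*} [NormedAddCommGroup E] [NormedSpace ℝ E] :
    List E → (E → ℝ) → E → ℝ
  | [], u => u
  | v :: L, u => DGen L fun p => fderiv ℝ u p v

/-- Directional derivative. -/
def Dv {n : ℕ} (v : ℝ × Esp n) (u : ℝ × Esp n → ℝ) : ℝ × Esp n → ℝ :=
  fun p => fderiv ℝ u p v

/-- Time derivative D_t (at fixed Lagrangian coordinate y). -/
def Dt {n : ℕ} (u : ℝ × Esp n → ℝ) : ℝ × Esp n → ℝ := Dv ((1 : ℝ), (0 : Esp n)) u

/-- Spatial partial derivative ∂/∂yᵃ. -/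
def Dy {n : ℕ} (a : Fin n) (u : ℝ × Esp n → ℝ) : ℝ × Esp n → ℝ :=
  Dv ((0 : ℝ), EuclideanSpace.single a (1 : ℝ)) u

/-- The n+1 coordinate directions in space-time. -/
def dirST (n : ℕ) : Fin (n + 1) → ℝ × Esp n :=
  Fin.cons ((1 : ℝ), (0 : Esp n)) fun a => ((0 : ℝ), EuclideanSpace.single a (1 : ℝ))

/-- Σ_{|α| ≤ r} |∂_{t,y}^α u (p)| (sum over ordered tuples of coordinate directions). -/
def derivSum {n : ℕ} (r : ℕ) (u : ℝ × Esp n → ℝ) (p : ℝ × Esp n) : ℝ :=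
  ∑ k ∈ Finset.range (r + 1), ∑ f : Fin k → Fin (n + 1),
    |DGen (List.ofFn fun i => dirST n (f i)) u p|

/-- The norm |||u|||_{r,∞} over [0,T] × Ω. -/
def supNorm {n : ℕ} (T : ℝ) (r : ℕ) (u : ℝ × Esp n → ℝ) : ℝ :=
  sSup (derivSum r u '' STc n T)

/-- |||x|||_{r,∞} for ℝⁿ-valued functions. -/
def supNormV {n : ℕ} (T : ℝ) (r : ℕ) (x : ℝ × Esp n → Fin n → ℝ) : ℝ :=
  ∑ i, supNorm T r fun p => x p i

/-- Smooth (C^∞) scalar function on space-time. -/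
def Smooth {n : ℕ} (u : ℝ × Esp n → ℝ) : Prop := ContDiff ℝ (⊤ : ℕ∞) u

/-- Smooth ℝⁿ-valued function on space-time. -/
def SmoothV {n : ℕ} (x : ℝ × Esp n → Fin n → ℝ) : Prop :=
  ∀ i, ContDiff ℝ (⊤ : ℕ∞) fun p => x p i

/-- All time derivatives vanish at t = 0 (on Ω): membership in C^∞_{00}. -/
def Vanish00 {n : ℕ} (u : ℝ × Esp n → ℝ) : Prop :=
  ∀ k : ℕ, ∀ y ∈ Omega n, (Dt^[k] u) ((0 : ℝ), y) = 0

def Vanish00V {n : ℕ} (x : ℝ × Esp n → Fin n → ℝ) : Prop :=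
  ∀ i, Vanish00 fun p => x p i

/-- The Jacobian matrix ∂x/∂y : (∂xⁱ/∂yᵃ)_{ia}. -/
def Jac {n : ℕ} (x : ℝ × Esp n → Fin n → ℝ) (p : ℝ × Esp n) :
    Matrix (Fin n) (Fin n) ℝ :=
  Matrix.of fun i a => Dy a (fun q => x q i) p

/-- The metric g_{ab} = Σ_i (∂xⁱ/∂yᵃ)(∂xⁱ/∂yᵇ). -/
def gMat {n : ℕ} (x : ℝ × Esp n → Fin n → ℝ) (p : ℝ × Esp n) :
    Matrix (Fin n) (Fin n) ℝ :=
  (Jac x p)ᵀ * Jac x p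

/-- The inverse metric g^{ab}. -/
def gInv {n : ℕ} (x : ℝ × Esp n → Fin n → ℝ) (p : ℝ × Esp n) :
    Matrix (Fin n) (Fin n) ℝ :=
  (gMat x p)⁻¹

/-- κ = det(∂x/∂y). -/
def kap {n : ℕ} (x : ℝ × Esp n → Fin n → ℝ) (p : ℝ × Esp n) : ℝ := (Jac x p).det

/-- Eulerian partial derivative ∂_i = (∂yᵃ/∂xⁱ) ∂/∂yᵃ. -/
def pdX {n : ℕ} (x : ℝ × Esp n → Fin n → ℝ) (i : Fin n) (u : ℝ × Esp n → ℝ) :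
    ℝ × Esp n → ℝ :=
  fun p => ∑ a, (Jac x p)⁻¹ a i * Dy a u p

/-- The velocity V = D_t x. -/
def Vel {n : ℕ} (x : ℝ × Esp n → Fin n → ℝ) : ℝ × Esp n → Fin n → ℝ :=
  fun p i => Dt (fun q => x q i) p

/-- div V = ∂_i Vⁱ. -/
def divV {n : ℕ} (x : ℝ × Esp n → Fin n → ℝ) : ℝ × Esp n → ℝ :=
  fun p => ∑ i, pdX x i (fun q => Vel x q i) p

/-- Δq = κ⁻¹ ∂_a (κ g^{ab} ∂_b q). -/
def Lap {n : ℕ} (x : ℝ × Esp n → Fin n → ℝ) (q : ℝ × Esp n → ℝ) :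
    ℝ × Esp n → ℝ :=
  fun p => (kap x p)⁻¹ *
    ∑ a, Dy a (fun z => kap x z * ∑ b, gInv x z a b * Dy b q z) p

/-- The exterior normal derivative ∇_N h, with Nᵃ = g^{ab} y_b / √(g^{cd} y_c y_d). -/
def nablaN {n : ℕ} (x : ℝ × Esp n → Fin n → ℝ) (h : ℝ × Esp n → ℝ)
    (p : ℝ × Esp n) : ℝ :=
  (∑ a, (∑ b, gInv x p a b * p.2 b) * Dy a h p) /
    Real.sqrt (∑ c, ∑ d, gInv x p c d * p.2 c * p.2 d)

/-- The coordinate condition with constant c₁ at the point p. -/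
def coordCond {n : ℕ} (c₁ : ℝ) (x : ℝ × Esp n → Fin n → ℝ) (p : ℝ × Esp n) : Prop :=
  (∑ a, ∑ b, (|gMat x p a b| + |gInv x p a b|)) ≤ c₁ ^ 2 ∧
    (∑ i, ∑ a, Jac x p i a ^ 2) + (∑ a, ∑ i, ((Jac x p)⁻¹ a i) ^ 2) ≤ c₁ ^ 2

/-- The physical condition ∇_N h ≤ -c₀ on ∂Ω at time t. -/
def physCond {n : ℕ} (c₀ : ℝ) (x : ℝ × Esp n → Fin n → ℝ) (h : ℝ × Esp n → ℝ)
    (t : ℝ) : Prop :=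
  ∀ y ∈ Bdry n, nablaN x h (t, y) ≤ -c₀

/-- Θᵢ(x,h) = D_t² xᵢ + ∂_i h. -/
def EulerOp {n : ℕ} (x : ℝ × Esp n → Fin n → ℝ) (h : ℝ × Esp n → ℝ) (i : Fin n) :
    ℝ × Esp n → ℝ :=
  fun p => Dt (Dt fun q => x q i) p + pdX x i h p

/-- The source term (∂_i V^k)(∂_k V^i). -/
def WaveSrc {n : ℕ} (x : ℝ × Esp n → Fin n → ℝ) : ℝ × Esp n → ℝ :=
  fun p => ∑ i, ∑ k, pdX x i (fun q => Vel x q k) p * pdX x k (fun q => Vel x q i) p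

/-- Θ₀(x,h) = D_t² e(h) − Δh − (∂_i V^k)(∂_k V^i). -/
def WaveOp {n : ℕ} (e : ℝ → ℝ) (x : ℝ × Esp n → Fin n → ℝ) (h : ℝ × Esp n → ℝ) :
    ℝ × Esp n → ℝ :=
  fun p => Dt (Dt fun q => e (h q)) p - Lap x h p - WaveSrc x p

/-- Compatibility conditions to all orders: all time derivatives of Θ(x,h) vanish at t=0. -/
def CompatAll {n : ℕ} (e : ℝ → ℝ) (x : ℝ × Esp n → Fin n → ℝ)
    (h : ℝ × Esp n → ℝ) : Prop :=
  (∀ k : ℕ, ∀ i : Fin n, ∀ y ∈ Omega n, (Dt^[k] (EulerOp x h i)) ((0 : ℝ), y) = 0) ∧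
    ∀ k : ℕ, ∀ y ∈ Omega n, (Dt^[k] (WaveOp e x h)) ((0 : ℝ), y) = 0

/-- L²(Ω) norm of a function of the space variable. -/
def L2Omega {n : ℕ} (u : Esp n → ℝ) : ℝ := Real.sqrt (∫ y in Omega n, u y ^ 2)

/-- Σ_{|α| ≤ r} ‖∂_y^α u(t,·)‖_{L²(Ω)} : spatial derivatives only. -/
def spL2 {n : ℕ} (r : ℕ) (u : ℝ × Esp n → ℝ) (t : ℝ) : ℝ :=
  ∑ j ∈ Finset.range (r + 1), ∑ f : Fin j → Fin n,
    L2Omega fun y =>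
      DGen (List.ofFn fun i =>
        (((0 : ℝ), EuclideanSpace.single (f i) (1 : ℝ)) : ℝ × Esp n)) u (t, y)

/-- The mixed norm ‖u(t)‖_{r,s} = Σ_{|α|≤r, k≤s} ‖∂_t^k ∂_y^α u(t,·)‖_{L²(Ω)}. -/
def mixL2 {n : ℕ} (r s : ℕ) (u : ℝ × Esp n → ℝ) (t : ℝ) : ℝ :=
  ∑ k ∈ Finset.range (s + 1), spL2 r (Dt^[k] u) t

/-- The norm ‖u(t)‖_r = Σ_{|α|+k ≤ r} ‖∂_t^k ∂_y^α u(t,·)‖_{L²(Ω)}. -/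
def stL2 {n : ℕ} (r : ℕ) (u : ℝ × Esp n → ℝ) (t : ℝ) : ℝ :=
  ∑ k ∈ Finset.range (r + 1), ∑ f : Fin k → Fin (n + 1),
    L2Omega fun y => DGen (List.ofFn fun i => dirST n (f i)) u (t, y)

/-- Σ_{a,b} |||g_{ab}|||_{m,∞}. -/
def gNorm {n : ℕ} (T : ℝ) (x : ℝ × Esp n → Fin n → ℝ) (m : ℕ) : ℝ :=
  ∑ a, ∑ b, supNorm T m fun p => gMat x p a b

/-- Sums of products of norms of g over tuples (m₁,…,m_k), m_i ≥ 1, Σ m_i ≤ m,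
including the empty tuple (contributing 1). -/
def gBrP {n : ℕ} (T : ℝ) (x : ℝ × Esp n → Fin n → ℝ) : ℕ → ℝ
  | 0 => 1
  | m + 1 => 1 + ∑ j ∈ Finset.range (m + 1), gNorm T x (j + 1) * gBrP T x (m - j)

/-- The bracket [[[g]]]_{m,∞}: sum over nonempty tuples for m ≥ 1, and 1 for m = 0. -/
def gBr {n : ℕ} (T : ℝ) (x : ℝ × Esp n → Fin n → ℝ) (m : ℕ) : ℝ :=
  if m = 0 then 1 else gBrP T x m - 1

/-- Spatial directional derivative on Ω (fixed time). -/
def DyS {n : ℕ} (a : Fin n) (u : Esp n → ℝ) : Esp n → ℝ :=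
  fun y => fderiv ℝ u y (EuclideanSpace.single a (1 : ℝ))

/-- Spatial Jacobian of a map Ω → ℝⁿ. -/
def JacSp {n : ℕ} (f : Esp n → Fin n → ℝ) (y : Esp n) : Matrix (Fin n) (Fin n) ℝ :=
  Matrix.of fun i a => DyS a (fun z => f z i) y

def gMatSp {n : ℕ} (f : Esp n → Fin n → ℝ) (y : Esp n) : Matrix (Fin n) (Fin n) ℝ :=
  (JacSp f y)ᵀ * JacSp f y

def gInvSp {n : ℕ} (f : Esp n → Fin n → ℝ) (y : Esp n) : Matrix (Fin n) (Fin n) ℝ :=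
  (gMatSp f y)⁻¹

def kapSp {n : ℕ} (f : Esp n → Fin n → ℝ) (y : Esp n) : ℝ := (JacSp f y).det

/-- div W = κ⁻¹ ∂_a (κ Wᵃ) (fixed time). -/
def divSp {n : ℕ} (x : Esp n → Fin n → ℝ) (W : Esp n → Fin n → ℝ) (y : Esp n) : ℝ :=
  (kapSp x y)⁻¹ * ∑ a, DyS a (fun z => kapSp x z * W z a) y

/-- L²(Ω) norm of a vector field. -/
def L2OmegaV {n : ℕ} (u : Esp n → Fin n → ℝ) : ℝ :=
  Real.sqrt (∫ y in Omega n, ∑ a, u y a ^ 2)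

/-- The LHS of the linearized Euler equation (2.28):
D_t²δxᵢ + (∂_i∂_k h)δx^k − ∂_i(δx^k ∂_k h − δh). -/
def LinEuler {n : ℕ} (x : ℝ × Esp n → Fin n → ℝ) (h δh : ℝ × Esp n → ℝ)
    (δx : ℝ × Esp n → Fin n → ℝ) (i : Fin n) : ℝ × Esp n → ℝ :=
  fun q => Dt (Dt fun z => δx z i) q + (∑ k, pdX x i (pdX x k h) q * δx q k)
    - pdX x i (fun z => (∑ k, δx z k * pdX x k h z) - δh z) q

/-- The LHS of the linearized wave equation (2.29):
D_t²(e′(h)δh) − δx^k ∂_k D_t²e(h) − Δ(δh − δx^k∂_k h) − 2(∂_iV^k)∂_k(δV^i − δx^l∂_lV^i). -/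
def LinWave {n : ℕ} (e : ℝ → ℝ) (x : ℝ × Esp n → Fin n → ℝ) (h δh : ℝ × Esp n → ℝ)
    (δx δV : ℝ × Esp n → Fin n → ℝ) : ℝ × Esp n → ℝ :=
  fun q =>
    Dt (Dt fun z => deriv e (h z) * δh z) q
      - (∑ k, δx q k * pdX x k (fun z => Dt (Dt fun w => e (h w)) z) q)
      - Lap x (fun z => δh z - ∑ k, δx z k * pdX x k h z) q
      - 2 * ∑ i, ∑ k, pdX x i (fun z => Vel x z k) q *
          pdX x k (fun z => δV z i - ∑ l, δx z l * pdX x l (fun w => Vel x w i) z) q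

/-- M(t) = sup_{y∈Ω} (|∂x/∂y|² + |(∂x/∂y)⁻¹|²)^{1/2} (Frobenius norms). -/
def Mjac {n : ℕ} (x : ℝ × Esp n → Fin n → ℝ) (t : ℝ) : ℝ :=
  sSup ((fun y => Real.sqrt ((∑ i, ∑ a, Jac x (t, y) i a ^ 2) +
      (∑ a, ∑ i, ((Jac x (t, y))⁻¹ a i) ^ 2))) '' Omega n)

/-- N(t) = sup_{y∈∂Ω} |∇_N h(t,y)|⁻¹. -/
def Nenth {n : ℕ} (x : ℝ × Esp n → Fin n → ℝ) (h : ℝ × Esp n → ℝ) (t : ℝ) : ℝ :=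
  sSup ((fun y => |nablaN x h (t, y)|⁻¹) '' Bdry n)


/-!
Over `[0, t]` each entry of the Jacobian `A_t = ∂x/∂y (t, y)` moves by the time integral of a
second derivative of `x`, so `‖A_t - A_0‖ ≤ t |||x|||_{2,∞}` in the Frobenius norm and the
smallness hypothesis gives `‖A_0⁻¹‖ ‖A_t - A_0‖ ≤ 1/8`. Writing `A_t⁻¹ - A_0⁻¹` as
`A_0⁻¹ (A_0 - A_t) A_t⁻¹` then yields `‖A_t⁻¹‖ ≤ 8/7 ‖A_0⁻¹‖`, and `‖A_t‖ ≤ 9/8 ‖A_0‖` follows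
from `‖A_t - A_0‖ ≤ ‖A_0‖ ‖A_0⁻¹‖ ‖A_t - A_0‖`; since `(8/7)² < 4`, this gives (a).

For (b): as `h(t, ·)` vanishes on the sphere, its gradient there is radial, and
`∇_N h = ∂_r h · |y A⁻¹|` with `∂_r h = yᵃ ∂_a h`. In time, `∂_r h` moves by at most
`t |||h|||_{2,∞}` while `|y A_t⁻¹| ≥ 8/9 |y A_0⁻¹|`, which keeps `|∇_N h|` above `7/9` of its
initial value.
-/

open scoped Matrix.Norms.Frobenius

section Frobenius

variable {ι κ : Type*} [Fintype ι] [Fintype κ]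

lemma frobenius_norm_sq_eq_sum_sq (A : Matrix κ ι ℝ) : ‖A‖ ^ 2 = ∑ i, ∑ j, A i j ^ 2 := by
  rw [Matrix.frobenius_norm_def, ← Real.sqrt_eq_rpow, Real.sq_sqrt (by positivity)]
  simp only [Real.rpow_two, Real.norm_eq_abs, sq_abs]

lemma frobenius_norm_le_sum_abs (A : Matrix κ ι ℝ) : ‖A‖ ≤ ∑ i, ∑ j, |A i j| := by
  refine (abs_le_of_sq_le_sq' ?_ (by positivity)).2
  rw [frobenius_norm_sq_eq_sum_sq]
  calc ∑ i, ∑ j, A i j ^ 2 ≤ ∑ i, (∑ j, |A i j|) ^ 2 := by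
        gcongr with i
        simpa only [sq_abs] using Finset.sum_sq_le_sq_sum_of_nonneg fun j _ => abs_nonneg (A i j)
    _ ≤ (∑ i, ∑ j, |A i j|) ^ 2 := Finset.sum_sq_le_sq_sum_of_nonneg fun i _ => by positivity

lemma sum_mul_transpose_mul_mul_eq_norm_sq (B : Matrix ι ι ℝ) (v : ι → ℝ) :
    ∑ c, ∑ d, (B * Bᵀ) c d * v c * v d = ‖Matrix.replicateRow (Fin 1) v * B‖ ^ 2 := by
  rw [frobenius_norm_sq_eq_sum_sq, eq_comm]
  simp only [Matrix.mul_apply, Matrix.transpose_apply, Matrix.replicateRow_apply,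
    Fin.sum_univ_one, sq, Finset.sum_mul, Finset.mul_sum]
  rw [Finset.sum_comm]
  refine Finset.sum_congr rfl fun c _ => ?_
  rw [Finset.sum_comm]
  exact Finset.sum_congr rfl fun d _ => Finset.sum_congr rfl fun k _ => by ring

variable [DecidableEq ι]

lemma continuousOn_nonsing_inv {X 𝕜 : Type*} [TopologicalSpace X] [NormedField 𝕜]
    {A : X → Matrix ι ι 𝕜} {s : Set X} (hA : Continuous A) (hdet : ∀ p ∈ s, (A p).det ≠ 0) :
    ContinuousOn (fun p => (A p)⁻¹) s := by
  simp_rw [Matrix.inv_def, Ring.inverse_eq_inv']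
  exact (hA.matrix_det.continuousOn.inv₀ hdet).smul hA.matrix_adjugate.continuousOn

variable {𝕜 : Type*} [RCLike 𝕜] {A B : Matrix ι ι 𝕜}

lemma Matrix.nonsing_inv_sub_nonsing_inv (hA : IsUnit A.det) (hB : IsUnit B.det) :
    A⁻¹ - B⁻¹ = B⁻¹ * (B - A) * A⁻¹ := by
  rw [Matrix.mul_sub, Matrix.sub_mul, Matrix.nonsing_inv_mul _ hB, Matrix.mul_assoc,
    Matrix.mul_nonsing_inv _ hA, Matrix.one_mul, Matrix.mul_one]

lemma norm_le_nine_eighths_of_near (hA : IsUnit A.det) (hAB : ‖A⁻¹‖ * ‖B - A‖ ≤ 1 / 8) :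
    ‖B‖ ≤ 9 / 8 * ‖A‖ := by
  have hBA : ‖B - A‖ ≤ ‖A‖ * (‖A⁻¹‖ * ‖B - A‖) := by
    calc ‖B - A‖ = ‖A * (A⁻¹ * (B - A))‖ := by
          rw [← mul_assoc, Matrix.mul_nonsing_inv _ hA, one_mul]
      _ ≤ ‖A‖ * (‖A⁻¹‖ * ‖B - A‖) := norm_mul_le_of_le le_rfl (norm_mul_le _ _)
  have := norm_le_insert' B A
  nlinarith [norm_nonneg A]

lemma norm_inv_le_eight_sevenths_of_near (hA : IsUnit A.det) (hB : IsUnit B.det)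
    (hAB : ‖A⁻¹‖ * ‖B - A‖ ≤ 1 / 8) : ‖B⁻¹‖ ≤ 8 / 7 * ‖A⁻¹‖ := by
  have h : ‖B⁻¹‖ - ‖A⁻¹‖ ≤ ‖B⁻¹‖ * (‖A⁻¹‖ * ‖B - A‖) := by
    calc ‖B⁻¹‖ - ‖A⁻¹‖ ≤ ‖B⁻¹ - A⁻¹‖ := norm_sub_norm_le _ _
      _ = ‖A⁻¹ * (A - B) * B⁻¹‖ := by rw [Matrix.nonsing_inv_sub_nonsing_inv hB hA]
      _ ≤ ‖A⁻¹‖ * ‖A - B‖ * ‖B⁻¹‖ := norm_mul₃_le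
      _ = ‖B⁻¹‖ * (‖A⁻¹‖ * ‖B - A‖) := by rw [norm_sub_rev]; ring
  nlinarith [norm_nonneg B⁻¹]

lemma norm_mul_inv_le_of_near (hA : IsUnit A.det) (hB : IsUnit B.det)
    (hAB : ‖A⁻¹‖ * ‖B - A‖ ≤ 1 / 8) (Y : Matrix κ ι 𝕜) :
    ‖Y * A⁻¹‖ ≤ 9 / 8 * ‖Y * B⁻¹‖ := by
  have h : ‖Y * A⁻¹‖ - ‖Y * B⁻¹‖ ≤ ‖Y * B⁻¹‖ * (‖A⁻¹‖ * ‖B - A‖) := by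
    calc ‖Y * A⁻¹‖ - ‖Y * B⁻¹‖ ≤ ‖Y * A⁻¹ - Y * B⁻¹‖ := norm_sub_norm_le _ _
      _ = ‖Y * B⁻¹ * ((B - A) * A⁻¹)‖ := by
          rw [← Matrix.mul_sub, Matrix.nonsing_inv_sub_nonsing_inv hA hB, Matrix.mul_assoc,
            Matrix.mul_assoc]
      _ ≤ ‖Y * B⁻¹‖ * (‖B - A‖ * ‖A⁻¹‖) :=
          (Matrix.frobenius_norm_mul _ _).trans (by gcongr; exact norm_mul_le _ _)
      _ = ‖Y * B⁻¹‖ * (‖A⁻¹‖ * ‖B - A‖) := by ring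
  nlinarith [norm_nonneg (Y * B⁻¹)]

lemma sqrt_norm_sq_add_norm_inv_sq_le_of_near (hA : IsUnit A.det) (hB : IsUnit B.det)
    (hAB : ‖A⁻¹‖ * ‖B - A‖ ≤ 1 / 8) :
    √(‖B‖ ^ 2 + ‖B⁻¹‖ ^ 2) ≤ 2 * √(‖A‖ ^ 2 + ‖A⁻¹‖ ^ 2) := by
  have h₁ := norm_le_nine_eighths_of_near hA hAB
  have h₂ := norm_inv_le_eight_sevenths_of_near hA hB hAB
  rw [Real.sqrt_le_left (by positivity), mul_pow, Real.sq_sqrt (by positivity)]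
  nlinarith [norm_nonneg B, norm_nonneg B⁻¹, norm_nonneg A, norm_nonneg A⁻¹]

end Frobenius

lemma sum_abs_sub_le_of_sum_abs_deriv_le {ι : Type*} [Fintype ι] {f f' : ι → ℝ → ℝ}
    {t C : ℝ} (hf : ∀ j τ, HasDerivAt (f j) (f' j τ) τ)
    (hC : ∀ τ ∈ Ico 0 t, ∑ j, |f' j τ| ≤ C) (ht : 0 ≤ t) :
    ∑ j, |f j t - f j 0| ≤ C * t := by
  -- the mean value inequality in `ℓ¹(ι)`
  let F : ℝ → PiLp 1 (fun _ : ι => ℝ) := fun τ => WithLp.toLp 1 fun j => f j τ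
  have hF : ∀ τ, HasDerivAt F (WithLp.toLp 1 fun j => f' j τ) τ := fun τ =>
    (PiLp.continuousLinearEquiv 1 ℝ _).symm.hasFDerivAt.comp_hasDerivAt τ
      (hasDerivAt_pi.2 fun j => hf j τ)
  have := norm_image_sub_le_of_norm_deriv_le_segment' (fun τ _ => (hF τ).hasDerivWithinAt)
    (fun τ hτ => by simpa [PiLp.norm_eq_of_L1] using hC τ hτ) t ⟨ht, le_rfl⟩
  simpa [F, PiLp.norm_eq_of_L1] using this


lemma fderiv_apply_eq_zero_of_inner_eq_zero {E : Type*} [NormedAddCommGroup E]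
    [InnerProductSpace ℝ E] {h : ℝ × E → ℝ} {t : ℝ} {y w : E}
    (hh : DifferentiableAt ℝ h (t, y)) (hbd : ∀ z ∈ sphere (0 : E) 1, h (t, z) = 0)
    (hy : y ∈ sphere (0 : E) 1) (hw : inner ℝ w y = 0) : fderiv ℝ h (t, y) (0, w) = 0 := by
  rcases eq_or_ne w 0 with rfl | hw0
  · exact (fderiv ℝ h (t, y)).map_zero
  set w₀ : E := ‖w‖⁻¹ • w
  have hw₀ : ‖w₀‖ = 1 := norm_smul_inv_norm hw0
  have hyw₀ : inner ℝ y w₀ = 0 := by rw [real_inner_smul_right, real_inner_comm, hw, mul_zero]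
  -- a great circle through `y` in the direction `w₀` stays on the sphere, where `h t` vanishes
  let c : ℝ → E := fun s => Real.cos s • y + Real.sin s • w₀
  have hc : ∀ s, c s ∈ sphere (0 : E) 1 := by
    intro s
    have hsq : ‖c s‖ ^ 2 = 1 ^ 2 := by
      rw [norm_add_sq_real, real_inner_smul_left, real_inner_smul_right, hyw₀, norm_smul,
        norm_smul, mem_sphere_zero_iff_norm.1 hy, hw₀, Real.norm_eq_abs, Real.norm_eq_abs]
      nlinarith [Real.sin_sq_add_cos_sq s, sq_abs (Real.sin s), sq_abs (Real.cos s)]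
    exact mem_sphere_zero_iff_norm.2 ((sq_eq_sq₀ (norm_nonneg _) zero_le_one).1 hsq)
  have hc' : HasDerivAt c w₀ 0 := by
    have := ((Real.hasDerivAt_cos 0).smul_const y).add ((Real.hasDerivAt_sin 0).smul_const w₀)
    simp only [Real.sin_zero, Real.cos_zero, neg_zero, zero_smul, one_smul, zero_add] at this
    exact this
  have hc0 : c 0 = y := by simp [c]
  have hzero : fderiv ℝ h (t, y) (0, w₀) = 0 := by
    have hcomp := (hc0 ▸ hh).hasFDerivAt.comp_hasDerivAt (0 : ℝ)
      ((hasDerivAt_const (0 : ℝ) t).prodMk hc')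
    rw [hc0] at hcomp
    have hconst : h ∘ (fun s => (t, c s)) = fun _ => 0 := funext fun s => hbd _ (hc s)
    exact hcomp.unique (hconst ▸ hasDerivAt_const (0 : ℝ) (0 : ℝ))
  have hscale : ((0 : ℝ), w) = ‖w‖ • ((0 : ℝ), w₀) := by
    simp [w₀, smul_inv_smul₀ (norm_ne_zero_iff.2 hw0)]
  rw [hscale, map_smul, hzero, smul_zero]

/-- The arithmetic of (b): `a * s` stands for `|∇_N h| = |∂_r h| · |y A_t⁻¹|` and `a₀ * s₀` for its
value at time `0`. -/
lemma inv_mul_le_two_mul_of_perturbation {a₀ a s₀ s δ N : ℝ} (hs₀ : 0 ≤ s₀)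
    (hs : s₀ ≤ 9 / 8 * s) (ha : a₀ - δ ≤ a) (hpos : 0 < a₀ * s₀) (hN : (a₀ * s₀)⁻¹ ≤ N)
    (hsmall : δ * s₀ * N ≤ 1 / 8) : (a * s)⁻¹ ≤ 2 * N := by
  have hN1 : 1 ≤ (a₀ * s₀) * N := (inv_le_iff_one_le_mul₀' hpos).1 hN
  have hδs : (a₀ - δ) * s₀ ≥ 7 / 8 * (a₀ * s₀) := by nlinarith
  have hgap : 0 ≤ a₀ - δ := by
    by_contra! hneg
    nlinarith [mul_nonpos_of_nonpos_of_nonneg hneg.le hs₀]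
  have hlow : 7 / 9 * (a₀ * s₀) ≤ a * s := by
    nlinarith [mul_le_mul ha (le_refl s) (by linarith) (hgap.trans ha)]
  calc (a * s)⁻¹ ≤ (7 / 9 * (a₀ * s₀))⁻¹ := inv_anti₀ (by positivity) hlow
    _ = 9 / 7 * (a₀ * s₀)⁻¹ := by rw [mul_inv]; norm_num
    _ ≤ 2 * N := by nlinarith [inv_pos.2 hpos]

section SpaceTime

variable {n : ℕ} {T : ℝ} {u : ℝ × Esp n → ℝ}

lemma Smooth.continuous (hu : Smooth u) : Continuous u := ContDiff.continuous hu

lemma Smooth.dv (hu : Smooth u) (v : ℝ × Esp n) : Smooth (Dv v u) :=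
  (ContinuousLinearMap.apply ℝ ℝ v).contDiff.comp (hu.fderiv_right (by exact_mod_cast le_top))

lemma Smooth.dGen (hu : Smooth u) (L : List (ℝ × Esp n)) : Smooth (DGen L u) := by
  induction L generalizing u with
  | nil => exact hu
  | cons v L ih => exact ih (hu.dv v)

lemma Smooth.hasDerivAt_time (hu : Smooth u) (y : Esp n) (t : ℝ) :
    HasDerivAt (fun s => u (s, y)) (Dt u (t, y)) t :=
  ((ContDiff.differentiable hu (by simp)) (t, y)).hasFDerivAt.comp_hasDerivAt t
    ((hasDerivAt_id t).prodMk (hasDerivAt_const t y))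

lemma derivSum_nonneg (r : ℕ) (u : ℝ × Esp n → ℝ) (p : ℝ × Esp n) : 0 ≤ derivSum r u p :=
  Finset.sum_nonneg fun _ _ => Finset.sum_nonneg fun _ _ => abs_nonneg _

lemma derivSum_le_supNorm (hu : Smooth u) (r : ℕ) {p : ℝ × Esp n} (hp : p ∈ STc n T) :
    derivSum r u p ≤ supNorm T r u := by
  have hcont : Continuous (derivSum r u) :=
    continuous_finsetSum _ fun _ _ => continuous_finsetSum _ fun _ _ =>
      ((hu.dGen _).continuous).abs
  exact le_csSup ((isCompact_Icc.prod (isCompact_closedBall 0 1)).bddAbove_image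
    hcont.continuousOn) ⟨p, hp, rfl⟩

lemma supNorm_nonneg (T : ℝ) (r : ℕ) (u : ℝ × Esp n → ℝ) : 0 ≤ supNorm T r u :=
  Real.sSup_nonneg <| by rintro _ ⟨p, -, rfl⟩; exact derivSum_nonneg r u p

lemma supNormV_nonneg (T : ℝ) (r : ℕ) (x : ℝ × Esp n → Fin n → ℝ) : 0 ≤ supNormV T r x :=
  Finset.sum_nonneg fun _ _ => supNorm_nonneg T r _

lemma sum_abs_Dt_Dy_le_derivSum (u : ℝ × Esp n → ℝ) (p : ℝ × Esp n) :
    ∑ a, |Dt (Dy a u) p| ≤ derivSum 2 u p := by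
  let e : Fin n ↪ (Fin 2 → Fin (n + 1)) :=
    ⟨fun a => ![a.succ, 0], fun a b hab => Fin.succ_injective _ (congrFun hab 0)⟩
  let term : (k : ℕ) → (Fin k → Fin (n + 1)) → ℝ :=
    fun k f => |DGen (List.ofFn fun i => dirST n (f i)) u p|
  calc ∑ a, |Dt (Dy a u) p| = ∑ f ∈ Finset.univ.map e, term 2 f := by
        rw [Finset.sum_map]; rfl
    _ ≤ ∑ f, term 2 f :=
        Finset.sum_le_sum_of_subset_of_nonneg (Finset.subset_univ _) fun _ _ _ => abs_nonneg _
    _ ≤ derivSum 2 u p :=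
        Finset.single_le_sum (f := fun k => ∑ f, term k f)
          (fun _ _ => Finset.sum_nonneg fun _ _ => abs_nonneg _) (by simp)

end SpaceTime

section Jacobian

variable {n : ℕ} {T t : ℝ} {y : Esp n} {x : ℝ × Esp n → Fin n → ℝ}

lemma SmoothV.coord (hx : SmoothV x) (i : Fin n) : Smooth fun p => x p i := hx i

lemma continuous_Jac (hx : SmoothV x) : Continuous (Jac x) :=
  continuous_matrix fun i _ => ((hx.coord i).dv _).continuous

lemma norm_Jac_sub_le (hx : SmoothV x) (ht : t ∈ Icc 0 T) (hy : y ∈ Omega n) :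
    ‖Jac x (t, y) - Jac x (0, y)‖ ≤ t * supNormV T 2 x := by
  have hbound : ∀ τ ∈ Ico 0 t,
      ∑ q : Fin n × Fin n, |Dt (Dy q.2 fun p => x p q.1) (τ, y)| ≤ supNormV T 2 x := by
    intro τ hτ
    have hmem : (τ, y) ∈ STc n T := ⟨⟨hτ.1, hτ.2.le.trans ht.2⟩, hy⟩
    rw [Fintype.sum_prod_type]
    exact Finset.sum_le_sum fun i _ =>
      (sum_abs_Dt_Dy_le_derivSum _ _).trans (derivSum_le_supNorm (hx.coord i) 2 hmem)
  calc ‖Jac x (t, y) - Jac x (0, y)‖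
      ≤ ∑ i, ∑ a, |Jac x (t, y) i a - Jac x (0, y) i a| := frobenius_norm_le_sum_abs _
    _ = ∑ q : Fin n × Fin n, |Jac x (t, y) q.1 q.2 - Jac x (0, y) q.1 q.2| := by
        simp only [Fintype.sum_prod_type]
    _ ≤ supNormV T 2 x * t := sum_abs_sub_le_of_sum_abs_deriv_le
        (fun q τ => ((hx.coord q.1).dv _).hasDerivAt_time y τ) hbound ht.1
    _ = t * supNormV T 2 x := mul_comm _ _

lemma Mjac_eq_sSup (x : ℝ × Esp n → Fin n → ℝ) (t : ℝ) :
    Mjac x t = sSup ((fun y => √(‖Jac x (t, y)‖ ^ 2 + ‖(Jac x (t, y))⁻¹‖ ^ 2)) '' Omega n) := by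
  simp only [Mjac, frobenius_norm_sq_eq_sum_sq]

lemma Mjac_nonneg (x : ℝ × Esp n → Fin n → ℝ) (t : ℝ) : 0 ≤ Mjac x t :=
  Real.sSup_nonneg <| by rintro _ ⟨_, -, rfl⟩; exact Real.sqrt_nonneg _

lemma sqrt_norm_sq_add_norm_inv_sq_le_Mjac (hx : SmoothV x)
    (hjac : ∀ p ∈ STc n T, (Jac x p).det ≠ 0) (ht : t ∈ Icc 0 T) (hy : y ∈ Omega n) :
    √(‖Jac x (t, y)‖ ^ 2 + ‖(Jac x (t, y))⁻¹‖ ^ 2) ≤ Mjac x t := by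
  have hJ : Continuous fun z : Esp n => Jac x (t, z) :=
    (continuous_Jac hx).comp (Continuous.prodMk_right t)
  have hJinv : ContinuousOn (fun z : Esp n => (Jac x (t, z))⁻¹) (Omega n) :=
    continuousOn_nonsing_inv hJ fun z hz => hjac _ ⟨ht, hz⟩
  rw [Mjac_eq_sSup]
  exact le_csSup ((isCompact_closedBall 0 1).bddAbove_image
    ((hJ.norm.pow 2).continuousOn.add (hJinv.norm.pow 2)).sqrt) ⟨y, hy, rfl⟩

lemma norm_inv_Jac_le_Mjac (hx : SmoothV x) (hjac : ∀ p ∈ STc n T, (Jac x p).det ≠ 0)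
    (ht : t ∈ Icc 0 T) (hy : y ∈ Omega n) : ‖(Jac x (t, y))⁻¹‖ ≤ Mjac x t :=
  ((Real.le_sqrt (norm_nonneg _) (by positivity)).2 (le_add_of_nonneg_left (by positivity))).trans
    (sqrt_norm_sq_add_norm_inv_sq_le_Mjac hx hjac ht hy)

lemma norm_inv_Jac_mul_norm_sub_le (hx : SmoothV x) (hjac : ∀ p ∈ STc n T, (Jac x p).det ≠ 0)
    (hsmall : T * supNormV T 2 x * Mjac x 0 ≤ 1 / 8) (ht : t ∈ Icc 0 T) (hy : y ∈ Omega n) :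
    ‖(Jac x (0, y))⁻¹‖ * ‖Jac x (t, y) - Jac x (0, y)‖ ≤ 1 / 8 := by
  have h0 : (0 : ℝ) ∈ Icc 0 T := ⟨le_rfl, ht.1.trans ht.2⟩
  calc ‖(Jac x (0, y))⁻¹‖ * ‖Jac x (t, y) - Jac x (0, y)‖
      ≤ Mjac x 0 * (T * supNormV T 2 x) :=
        mul_le_mul (norm_inv_Jac_le_Mjac hx hjac h0 hy)
          ((norm_Jac_sub_le hx ht hy).trans (by gcongr; exacts [supNormV_nonneg T 2 x, ht.2]))
          (norm_nonneg _) (Mjac_nonneg x 0)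
    _ ≤ 1 / 8 := by linarith

theorem Mjac_le_two_mul (hx : SmoothV x) (hjac : ∀ p ∈ STc n T, (Jac x p).det ≠ 0)
    (hsmall : T * supNormV T 2 x * Mjac x 0 ≤ 1 / 8) (ht : t ∈ Icc 0 T) :
    Mjac x t ≤ 2 * Mjac x 0 := by
  have h0 : (0 : ℝ) ∈ Icc 0 T := ⟨le_rfl, ht.1.trans ht.2⟩
  rw [Mjac_eq_sSup x t]
  refine Real.sSup_le ?_ (by linarith [Mjac_nonneg x 0])
  rintro _ ⟨y, hy, rfl⟩
  calc √(‖Jac x (t, y)‖ ^ 2 + ‖(Jac x (t, y))⁻¹‖ ^ 2)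
      ≤ 2 * √(‖Jac x (0, y)‖ ^ 2 + ‖(Jac x (0, y))⁻¹‖ ^ 2) :=
        sqrt_norm_sq_add_norm_inv_sq_le_of_near (hjac (0, y) ⟨h0, hy⟩).isUnit
          (hjac (t, y) ⟨ht, hy⟩).isUnit
          (norm_inv_Jac_mul_norm_sub_le hx hjac hsmall ht hy)
    _ ≤ 2 * Mjac x 0 := by gcongr; exact sqrt_norm_sq_add_norm_inv_sq_le_Mjac hx hjac h0 hy

end Jacobian

def radialDeriv {n : ℕ} (h : ℝ × Esp n → ℝ) (p : ℝ × Esp n) : ℝ := ∑ b, p.2 b * Dy b h p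

section Boundary

variable {n : ℕ} {T t : ℝ} {y : Esp n} {x : ℝ × Esp n → Fin n → ℝ} {h : ℝ × Esp n → ℝ}

lemma sum_sq_eq_one_of_mem_Bdry (hy : y ∈ Bdry n) : ∑ a, y a ^ 2 = 1 := by
  have := EuclideanSpace.norm_sq_eq y
  simp only [Real.norm_eq_abs, sq_abs, mem_sphere_zero_iff_norm.1 hy, one_pow] at this
  exact this.symm

lemma Dy_eq_mul_radialDeriv (hh : Smooth h) (hbd : ∀ z ∈ Bdry n, h (t, z) = 0)
    (hy : y ∈ Bdry n) (a : Fin n) : Dy a h (t, y) = y a * radialDeriv h (t, y) := by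
  have hdiff : DifferentiableAt ℝ h (t, y) := ContDiff.differentiable hh (by simp) _
  have hy1 : ‖y‖ = 1 := mem_sphere_zero_iff_norm.1 hy
  -- split `e_b` into its normal part `y b • y` and a tangential part, killed by `h t = 0` on ∂Ω
  have hnormal : ∀ b, Dy b h (t, y) = y b * fderiv ℝ h (t, y) (0, y) := by
    intro b
    have htan : inner ℝ (EuclideanSpace.single b (1 : ℝ) - y b • y) y = 0 := by
      rw [inner_sub_left, real_inner_smul_left, real_inner_self_eq_norm_sq, hy1,
        EuclideanSpace.inner_single_left]
      simp
    have hsplit : ((0 : ℝ), EuclideanSpace.single b (1 : ℝ)) =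
        y b • ((0 : ℝ), y) + ((0 : ℝ), EuclideanSpace.single b 1 - y b • y) := by
      simp
    change fderiv ℝ h (t, y) _ = _
    rw [hsplit, map_add, map_smul, fderiv_apply_eq_zero_of_inner_eq_zero hdiff hbd hy htan,
      add_zero, smul_eq_mul]
  simp_rw [radialDeriv, hnormal, ← mul_assoc, ← Finset.sum_mul, ← sq,
    sum_sq_eq_one_of_mem_Bdry hy, one_mul]

lemma gInv_eq_inv_mul_inv_transpose (x : ℝ × Esp n → Fin n → ℝ) (p : ℝ × Esp n) :
    gInv x p = (Jac x p)⁻¹ * ((Jac x p)⁻¹)ᵀ := by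
  rw [gInv, gMat, Matrix.mul_inv_rev, Matrix.transpose_nonsing_inv]

lemma nablaN_eq_on_Bdry (hh : Smooth h) (hbd : ∀ z ∈ Bdry n, h (t, z) = 0) (hy : y ∈ Bdry n) :
    nablaN x h (t, y) =
      radialDeriv h (t, y) * ‖Matrix.replicateRow (Fin 1) (WithLp.ofLp y) * (Jac x (t, y))⁻¹‖ := by
  have hnum : ∑ a, (∑ b, gInv x (t, y) a b * y b) * Dy a h (t, y) =
      radialDeriv h (t, y) * ∑ c, ∑ d, gInv x (t, y) c d * y c * y d := by
    simp_rw [Dy_eq_mul_radialDeriv hh hbd hy, Finset.mul_sum, Finset.sum_mul]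
    exact Finset.sum_congr rfl fun _ _ => Finset.sum_congr rfl fun _ _ => by ring
  rw [nablaN, hnum, gInv_eq_inv_mul_inv_transpose, sum_mul_transpose_mul_mul_eq_norm_sq,
    mul_div_assoc, Real.div_sqrt, Real.sqrt_sq (norm_nonneg _)]

lemma continuous_radialDeriv (hh : Smooth h) : Continuous (radialDeriv h) :=
  continuous_finsetSum _ fun b _ =>
    ((PiLp.continuous_apply 2 _ b).comp continuous_snd).mul (hh.dv _).continuous

lemma abs_radialDeriv_sub_le (hh : Smooth h) (ht : t ∈ Icc 0 T) (hy : y ∈ Bdry n) :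
    |radialDeriv h (t, y) - radialDeriv h (0, y)| ≤ t * supNorm T 2 h := by
  have hbound : ∀ τ ∈ Ico 0 t, ∑ b, |y b * Dt (Dy b h) (τ, y)| ≤ supNorm T 2 h := by
    intro τ hτ
    have hmem : (τ, y) ∈ STc n T := ⟨⟨hτ.1, hτ.2.le.trans ht.2⟩, sphere_subset_closedBall hy⟩
    calc ∑ b, |y b * Dt (Dy b h) (τ, y)| ≤ ∑ b, |Dt (Dy b h) (τ, y)| := by
          refine Finset.sum_le_sum fun b _ => ?_
          rw [abs_mul]
          exact mul_le_of_le_one_left (abs_nonneg _)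
            ((PiLp.norm_apply_le y b).trans_eq (mem_sphere_zero_iff_norm.1 hy))
      _ ≤ derivSum 2 h (τ, y) := sum_abs_Dt_Dy_le_derivSum _ _
      _ ≤ supNorm T 2 h := derivSum_le_supNorm hh 2 hmem
  rw [radialDeriv, radialDeriv, ← Finset.sum_sub_distrib, mul_comm]
  exact (Finset.abs_sum_le_sum_abs _ _).trans (sum_abs_sub_le_of_sum_abs_deriv_le
    (fun b τ => ((hh.dv _).hasDerivAt_time y τ).const_mul (y b)) hbound ht.1)

lemma Nenth_nonneg (x : ℝ × Esp n → Fin n → ℝ) (h : ℝ × Esp n → ℝ) (t : ℝ) :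
    0 ≤ Nenth x h t :=
  Real.sSup_nonneg <| by rintro _ ⟨_, -, rfl⟩; positivity

lemma inv_abs_nablaN_le_Nenth (hx : SmoothV x) (hdet : ∀ z ∈ Omega n, (Jac x (t, z)).det ≠ 0)
    (hh : Smooth h) (hbd : ∀ z ∈ Bdry n, h (t, z) = 0)
    (hne : ∀ z ∈ Bdry n, nablaN x h (t, z) ≠ 0) (hy : y ∈ Bdry n) :
    |nablaN x h (t, y)|⁻¹ ≤ Nenth x h t := by
  have hJ : Continuous fun z : Esp n => Jac x (t, z) :=
    (continuous_Jac hx).comp (Continuous.prodMk_right t)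
  have hJinv : ContinuousOn (fun z : Esp n => (Jac x (t, z))⁻¹) (Bdry n) :=
    continuousOn_nonsing_inv hJ fun z hz => hdet z (sphere_subset_closedBall hz)
  have hrow : Continuous fun z : Esp n => Matrix.replicateRow (Fin 1) (WithLp.ofLp z) :=
    (PiLp.continuous_ofLp 2 _).matrix_replicateRow
  have hcont : ContinuousOn (fun z => nablaN x h (t, z)) (Bdry n) :=
    (((continuous_radialDeriv hh).comp (Continuous.prodMk_right t)).continuousOn.mul
      ((continuous_fst.matrix_mul continuous_snd).comp_continuousOn
        (hrow.continuousOn.prodMk hJinv)).norm).congr fun z hz => nablaN_eq_on_Bdry hh hbd hz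
  exact le_csSup ((isCompact_sphere 0 1).bddAbove_image
    (hcont.abs.inv₀ fun z hz => abs_ne_zero.2 (hne z hz))) ⟨y, hy, rfl⟩

lemma inv_abs_nablaN_le_two_mul_Nenth (hx : SmoothV x)
    (hjac : ∀ p ∈ STc n T, (Jac x p).det ≠ 0) (hh : Smooth h)
    (hbd : ∀ t ∈ Icc 0 T, ∀ y ∈ Bdry n, h (t, y) = 0) (hne : ∀ y ∈ Bdry n, nablaN x h (0, y) ≠ 0)
    (hsA : T * supNormV T 2 x * Mjac x 0 ≤ 1 / 8)
    (hsB : T * supNorm T 2 h * Mjac x 0 * Nenth x h 0 ≤ 1 / 8) (ht : t ∈ Icc 0 T)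
    (hy : y ∈ Bdry n) : |nablaN x h (t, y)|⁻¹ ≤ 2 * Nenth x h 0 := by
  have h0 : (0 : ℝ) ∈ Icc 0 T := ⟨le_rfl, ht.1.trans ht.2⟩
  have hyΩ : y ∈ Omega n := sphere_subset_closedBall hy
  have hY : ‖Matrix.replicateRow (Fin 1) (WithLp.ofLp y)‖ = 1 :=
    (Matrix.frobenius_norm_replicateRow _).trans (mem_sphere_zero_iff_norm.1 hy)
  have hs₀ : ‖Matrix.replicateRow (Fin 1) (WithLp.ofLp y) * (Jac x (0, y))⁻¹‖ ≤ Mjac x 0 :=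
    (Matrix.frobenius_norm_mul _ _).trans <| by
      rw [hY, one_mul]; exact norm_inv_Jac_le_Mjac hx hjac h0 hyΩ
  have hN₀ := inv_abs_nablaN_le_Nenth hx (fun z hz => hjac (0, z) ⟨h0, hz⟩) hh (hbd 0 h0) hne hy
  have hpos := abs_pos.2 (hne y hy)
  have hradial : |radialDeriv h (0, y)| - T * supNorm T 2 h ≤ |radialDeriv h (t, y)| := by
    have := abs_sub_abs_le_abs_sub (radialDeriv h (0, y)) (radialDeriv h (t, y))
    rw [abs_sub_comm] at this
    nlinarith [abs_radialDeriv_sub_le hh ht hy, supNorm_nonneg T 2 h, ht.2]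
  rw [nablaN_eq_on_Bdry hh (hbd 0 h0) hy, abs_mul, abs_of_nonneg (norm_nonneg _)] at hN₀ hpos
  rw [nablaN_eq_on_Bdry hh (hbd t ht) hy, abs_mul, abs_of_nonneg (norm_nonneg _)]
  refine inv_mul_le_two_mul_of_perturbation (norm_nonneg _)
    (norm_mul_inv_le_of_near (hjac (0, y) ⟨h0, hyΩ⟩).isUnit (hjac (t, y) ⟨ht, hyΩ⟩).isUnit
      (norm_inv_Jac_mul_norm_sub_le hx hjac hsA ht hyΩ) _) hradial hpos hN₀ (hsB.trans' ?_)
  have := mul_nonneg h0.2 (supNorm_nonneg T 2 h)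
  have := Nenth_nonneg x h 0
  gcongr

theorem Nenth_le_two_mul (hx : SmoothV x) (hjac : ∀ p ∈ STc n T, (Jac x p).det ≠ 0)
    (hh : Smooth h) (hbd : ∀ t ∈ Icc 0 T, ∀ y ∈ Bdry n, h (t, y) = 0)
    (hne : ∀ y ∈ Bdry n, nablaN x h (0, y) ≠ 0)
    (hsA : T * supNormV T 2 x * Mjac x 0 ≤ 1 / 8)
    (hsB : T * supNorm T 2 h * Mjac x 0 * Nenth x h 0 ≤ 1 / 8) (ht : t ∈ Icc 0 T) :
    Nenth x h t ≤ 2 * Nenth x h 0 :=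
  Real.sSup_le
    (by rintro _ ⟨y, hy, rfl⟩; exact inv_abs_nablaN_le_two_mul_Nenth hx hjac hh hbd hne hsA hsB ht hy)
    (by linarith [Nenth_nonneg x h 0])

end Boundary

theorem lemma11_1_general (n : ℕ) (T : ℝ)
    (x : ℝ × Esp n → Fin n → ℝ) (hx : SmoothV x)
    (hjac : ∀ p ∈ STc n T, (Jac x p).det ≠ 0) :
    (T * supNormV T 2 x * Mjac x 0 ≤ 1 / 8 →
      ∀ t ∈ Set.Icc (0 : ℝ) T, Mjac x t ≤ 2 * Mjac x 0) ∧
    (∀ h : ℝ × Esp n → ℝ, Smooth h →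
      (∀ t ∈ Set.Icc (0 : ℝ) T, ∀ y ∈ Bdry n, h (t, y) = 0) →
      (∀ t ∈ Set.Icc (0 : ℝ) T, ∀ y ∈ Bdry n, nablaN x h (t, y) ≠ 0) →
      T * supNormV T 2 x * Mjac x 0 ≤ 1 / 8 →
      T * supNorm T 2 h * Mjac x 0 * Nenth x h 0 ≤ 1 / 8 →
      ∀ t ∈ Set.Icc (0 : ℝ) T, Nenth x h t ≤ 2 * Nenth x h 0) :=
  ⟨fun hsmall _ ht => Mjac_le_two_mul hx hjac hsmall ht,
    fun _ hh hbd hne hsA hsB _ ht =>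
      Nenth_le_two_mul hx hjac hh hbd (hne 0 ⟨le_rfl, ht.1.trans ht.2⟩) hsA hsB ht⟩

theorem lemma11_1 (n : ℕ) (T : ℝ) (hT : 0 < T)
    (x : ℝ × Esp n → Fin n → ℝ) (hx : SmoothV x)
    (hjac : ∀ p ∈ STc n T, (Jac x p).det ≠ 0) :
    (T * supNormV T 2 x * Mjac x 0 ≤ 1 / 8 →
      ∀ t ∈ Set.Icc (0 : ℝ) T, Mjac x t ≤ 2 * Mjac x 0) ∧
    (∀ h : ℝ × Esp n → ℝ, Smooth h →
      (∀ t ∈ Set.Icc (0 : ℝ) T, ∀ y ∈ Bdry n, h (t, y) = 0) →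
      (∀ t ∈ Set.Icc (0 : ℝ) T, ∀ y ∈ Bdry n, nablaN x h (t, y) ≠ 0) →
      T * supNormV T 2 x * Mjac x 0 ≤ 1 / 8 →
      T * supNorm T 2 h * Mjac x 0 * Nenth x h 0 ≤ 1 / 8 →
      ∀ t ∈ Set.Icc (0 : ℝ) T, Nenth x h t ≤ 2 * Nenth x h 0) :=
  lemma11_1_general n T x hx hjac

end FB
end
end
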